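/- A chain map f: X → Y between chain complexes over a field k which has the left lifting property with respect to all maps D^n → S^n (n ∈ ℤ) is both a monomorphism and a quasi-isomorphism. -/

import Mathlib

open CategoryTheory CategoryTheory.Limits

/-- The sphere chain complex `S^n(V)`: `V` concentrated in degree `n`. -/
noncomputable def sphere {k : Type} [CommRing k] (V : ModuleCat k) (n : ℤ) :
    ChainComplex (ModuleCat k) ℤ :=
  (HomologicalComplex.single (ModuleCat k) (ComplexShape.down ℤ) n).obj V

/-- Degree-`i` component of the disk complex `D^n(V)`. -/
noncomputable def diskX {k : Type} [CommRing k] (V : ModuleCat k) (n i : ℤ) : ModuleCat k :=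
  if i = n ∨ i = n - 1 then V else ModuleCat.of k PUnit

/-- The disk chain complex `D^n(V)`: `V` in degrees `n` and `n-1`, with identity
differential. -/
noncomputable def disk {k : Type} [CommRing k] (V : ModuleCat k) (n : ℤ) :
    ChainComplex (ModuleCat k) ℤ where
  X i := diskX V n i
  d i j :=
    if h : i = n ∧ j = n - 1 then
      eqToHom (show diskX V n i = diskX V n j by
        rw [diskX, diskX, if_pos (Or.inl h.1), if_pos (Or.inr h.2)])
    else 0
  shape i j hij := by
    rw [dif_neg]
    rintro ⟨h1, h2⟩
    exact hij (by simp only [ComplexShape.down_Rel]; omega)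
  d_comp_d' i j l _ _ := by
    by_cases h : i = n ∧ j = n - 1
    · rw [dif_neg (by omega : ¬ (j = n ∧ l = n - 1))]
      simp
    · rw [dif_neg h]
      simp

/-- The canonical projection `D^n(V) ⟶ S^n(V)`, the identity in degree `n`. -/
noncomputable def diskToSphere {k : Type} [CommRing k] (V : ModuleCat k) (n : ℤ) :
    disk V n ⟶ sphere V n :=
  HomologicalComplex.mkHomToSingle
    (eqToHom (show (disk V n).X n = V by
      simp [disk, diskX]))
    (fun i hi => by
      have : ¬ (i = n ∧ n = n - 1) := by omega
      simp only [disk, dif_neg this, zero_comp]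
      rfl)

/-- The canonical inclusion `S^n(V) ⟶ D^{n+1}(V)`, the identity in degree `n`. -/
noncomputable def sphereToDisk {k : Type} [CommRing k] (V : ModuleCat k) (n : ℤ) :
    sphere V n ⟶ disk V (n + 1) :=
  HomologicalComplex.mkHomFromSingle
    (eqToHom (show V = (disk V (n+1)).X n by
      simp [disk, diskX]))
    (fun j hj => by
      have : ¬ (n = n + 1 ∧ j = n + 1 - 1) := by omega
      simp only [disk, dif_neg this, comp_zero]
      rfl)

/-!
A chain map `X ⟶ D^n(V)` is the same as a map `X_{n-1} ⟶ V`, and a chain map `Y ⟶ S^n(V)` the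
same as a map `Y_n ⟶ V` killing boundaries. So lifting against `D^n(V) ⟶ S^n(V)` extends a map
`X_{n-1} ⟶ V` along `f` with a prescribed composite with the differential of `Y`. For `V = k`
these are linear functionals, which over a field separate points from subspaces; testing against
them shows that each `f_n` is injective and that `f` is injective and surjective on homology.
-/

open HomologicalComplex

theorem LinearMap.exists_comp_eq_of_ker_le {K V V' W : Type*} [Field K] [AddCommGroup V]
    [Module K V] [AddCommGroup V'] [Module K V'] [AddCommGroup W] [Module K W]
    (d : V →ₗ[K] V') (g : V →ₗ[K] W) (h : ker d ≤ ker g) :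
    ∃ Φ : V' →ₗ[K] W, Φ ∘ₗ d = g := by
  obtain ⟨s, hs⟩ := ((ker d).liftQ d le_rfl).exists_leftInverse_of_injective
    ((ker d).ker_liftQ_eq_bot' d rfl)
  refine ⟨(ker d).liftQ g h ∘ₗ s, LinearMap.ext fun v => ?_⟩
  have hsd : s (d v) = (ker d).mkQ v := congr($hs ((ker d).mkQ v))
  simp [hsd]

theorem ModuleCat.mem_of_forall_dual {K : Type*} [Field K] {M : ModuleCat K} (p : Submodule K M)
    {x : M} (h : ∀ φ : M ⟶ ModuleCat.of K K, (∀ y ∈ p, φ y = 0) → φ x = 0) :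
    x ∈ p := by
  by_contra hx
  obtain ⟨φ, hφx, hφp⟩ := p.exists_dual_map_eq_bot_of_notMem hx inferInstance
  exact hφx <| h (ModuleCat.ofHom φ) fun y hy =>
    (Submodule.mem_bot K).1 (hφp ▸ Submodule.mem_map_of_mem hy)

theorem ModuleCat.exists_epi_comp_eq_comp {R : Type*} [Ring R] {A M N : ModuleCat R}
    (x : A ⟶ N) (g : M ⟶ N) (h : ∀ a, x a ∈ LinearMap.range g.hom) :
    ∃ (A' : ModuleCat R) (π : A' ⟶ A) (_ : Epi π) (y : A' ⟶ M), π ≫ x = y ≫ g := by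
  let P := LinearMap.eqLocus (x.hom ∘ₗ LinearMap.fst R A M) (g.hom ∘ₗ LinearMap.snd R A M)
  refine ⟨ModuleCat.of R P, ModuleCat.ofHom (LinearMap.fst R A M ∘ₗ P.subtype),
    (ModuleCat.epi_iff_surjective _).2 fun a => ?_,
    ModuleCat.ofHom (LinearMap.snd R A M ∘ₗ P.subtype),
    ModuleCat.hom_ext (LinearMap.ext fun p => p.2)⟩
  obtain ⟨m, hm⟩ := h a
  exact ⟨⟨(a, m), hm.symm⟩, rfl⟩

namespace HomologicalComplex

variable {R : Type*} [Ring R] {ι : Type*} {c : ComplexShape ι}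
  {K L : HomologicalComplex (ModuleCat R) c} (φ : K ⟶ L) {i j k : ι}

theorem mono_homologyMap_of_forall_mem_range (hi : c.prev j = i) (hk : c.next j = k)
    (h : ∀ x : K.X j, K.d j k x = 0 → φ.f j x ∈ LinearMap.range (L.d i j).hom →
      x ∈ LinearMap.range (K.d i j).hom) :
    Mono (homologyMap φ j) := by
  rw [mono_homologyMap_iff_up_to_refinements φ i j k hi hk]
  intro A x₂ hx₂ y₁ hy₁
  exact ModuleCat.exists_epi_comp_eq_comp _ _ fun a =>
    h (x₂ a) congr($hx₂ a) ⟨y₁ a, congr($hy₁ a).symm⟩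

theorem epi_homologyMap_of_forall_mem_sup (hi : c.prev j = i) (hk : c.next j = k)
    (h : ∀ y : L.X j, L.d j k y = 0 →
      y ∈ (LinearMap.ker (K.d j k).hom).map (φ.f j).hom ⊔ LinearMap.range (L.d i j).hom) :
    Epi (homologyMap φ j) := by
  rw [epi_homologyMap_iff_up_to_refinements φ i j k hi hk]
  intro A y₂ hy₂
  let Z := LinearMap.ker (K.d j k).hom
  let g : ModuleCat.of R (Z × L.X i) ⟶ L.X j :=
    ModuleCat.ofHom (((φ.f j).hom ∘ₗ Z.subtype).coprod (L.d i j).hom)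
  obtain ⟨A', π, hπ, y, hy⟩ := ModuleCat.exists_epi_comp_eq_comp y₂ g fun a => by
    obtain ⟨_, ⟨z, hz, rfl⟩, _, ⟨b, rfl⟩, hzb⟩ :=
      Submodule.mem_sup.1 (h (y₂ a) congr($hy₂ a))
    exact ⟨(⟨z, hz⟩, b), hzb⟩
  refine ⟨A', π, hπ, y ≫ ModuleCat.ofHom (Z.subtype ∘ₗ LinearMap.fst R Z (L.X i)),
    ModuleCat.hom_ext (LinearMap.ext fun a => (y a).1.2),
    y ≫ ModuleCat.ofHom (LinearMap.snd R Z (L.X i)), ?_⟩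
  rw [hy]
  ext a
  rfl

end HomologicalComplex

section Disk

variable {k : Type} [CommRing k] (V : ModuleCat k)

lemma disk_X_eq {n i : ℤ} (h : i = n ∨ i = n - 1) : (disk V n).X i = V :=
  if_pos h

lemma disk_d_self (n : ℤ) :
    (disk V n).d n (n - 1) =
      eqToHom ((disk_X_eq V (Or.inl rfl)).trans (disk_X_eq V (Or.inr rfl)).symm) :=
  dif_pos ⟨rfl, rfl⟩

lemma disk_d_eq_zero {n i j : ℤ} (h : ¬(i = n ∧ j = n - 1)) : (disk V n).d i j = 0 :=
  dif_neg h

variable {X : ChainComplex (ModuleCat k) ℤ} (n : ℤ) (φ : X.X (n - 1) ⟶ V)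

noncomputable def toDisk : X ⟶ disk V n where
  f i :=
    if hi : i = n then
      X.d i (n - 1) ≫ φ ≫ eqToHom (disk_X_eq V (Or.inl hi)).symm
    else if hi' : i = n - 1 then
      eqToHom (congrArg X.X hi') ≫ φ ≫ eqToHom (disk_X_eq V (Or.inr hi')).symm
    else 0
  comm' i j hij := by
    have hij : j + 1 = i := hij
    by_cases hi : i = n
    · subst hi
      obtain rfl : j = i - 1 := by omega
      rw [dif_pos rfl, dif_neg (by omega), dif_pos rfl, disk_d_self]
      simp
    · rw [dif_neg hi, disk_d_eq_zero V (by tauto), comp_zero]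
      by_cases hj : j = n
      · subst hj
        simp
      · rw [dif_neg hj, dif_neg (by omega), comp_zero]

lemma toDisk_f_self :
    (toDisk V n φ).f n = X.d n (n - 1) ≫ φ ≫ eqToHom (disk_X_eq V (Or.inl rfl)).symm :=
  dif_pos rfl

lemma toDisk_f_pred :
    (toDisk V n φ).f (n - 1) = φ ≫ eqToHom (disk_X_eq V (Or.inr rfl)).symm := by
  simp [toDisk]

lemma diskToSphere_f_self :
    (diskToSphere V n).f n =
      eqToHom (disk_X_eq V (Or.inl rfl)) ≫ (singleObjXSelf (ComplexShape.down ℤ) n V).inv :=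
  mkHomToSingle_f _ _

end Disk

section Lifting

variable {k : Type} [CommRing k] {V : ModuleCat k} {X Y : ChainComplex (ModuleCat k) ℤ}
  {f : X ⟶ Y}

/-- `φ` and `ψ` form a commutative square from `f` to `D^i(V) ⟶ S^i(V)`, via `toDisk` and
`mkHomToSingle`; a lift in it is, in degree `j`, the required `φ'`. -/
theorem exists_lift_of_llp_diskToSphere {i j : ℤ} (hij : j + 1 = i)
    (hf : HasLiftingProperty f (diskToSphere V i)) (φ : X.X j ⟶ V) (ψ : Y.X i ⟶ V)
    (hψ : Y.d (i + 1) i ≫ ψ = 0) (hφψ : f.f i ≫ ψ = X.d i j ≫ φ) :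
    ∃ φ' : Y.X j ⟶ V, f.f j ≫ φ' = φ ∧ Y.d i j ≫ φ' = ψ := by
  obtain rfl : j = i - 1 := by omega
  have hψ' : ∀ l, (ComplexShape.down ℤ).Rel l i → Y.d l i ≫ ψ = 0 := by
    rintro _ rfl
    exact hψ
  have sq : CommSq (toDisk V i φ) f (diskToSphere V i) (mkHomToSingle ψ hψ') := ⟨by
    apply to_single_hom_ext
    erw [comp_f, comp_f]
    rw [toDisk_f_self, diskToSphere_f_self, mkHomToSingle_f]
    simp [reassoc_of% hφψ]⟩
  have := hf.sq_hasLift sq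
  have hlift_pred := congr($(sq.fac_left).f (i - 1))
  have hlift_self := congr($(sq.fac_right).f i)
  have hlift_comm := sq.lift.comm i (i - 1)
  simp only [comp_f, toDisk_f_pred] at hlift_pred
  rw [comp_f, diskToSphere_f_self, mkHomToSingle_f] at hlift_self
  rw [disk_d_self] at hlift_comm
  refine ⟨sq.lift.f (i - 1) ≫ eqToHom (disk_X_eq V (Or.inr rfl)), ?_, ?_⟩
  · simp [reassoc_of% hlift_pred]
  · rw [← reassoc_of% hlift_comm]
    simpa using (cancel_mono (singleObjXSelf (ComplexShape.down ℤ) i V).inv).1 hlift_self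

end Lifting

section Field

variable {k : Type} [Field k] {X Y : ChainComplex (ModuleCat k) ℤ} {f : X ⟶ Y}
  (hf : ∀ n, HasLiftingProperty f (diskToSphere (ModuleCat.of k k) n))
include hf

theorem exists_comp_eq_of_d_comp_eq_zero_of_llp {j : ℤ} (φ : X.X j ⟶ ModuleCat.of k k)
    (hφ : X.d (j + 1) j ≫ φ = 0) :
    ∃ ψ : Y.X j ⟶ ModuleCat.of k k, f.f j ≫ ψ = φ ∧ Y.d (j + 1) j ≫ ψ = 0 :=
  exists_lift_of_llp_diskToSphere rfl (hf _) φ 0 (by simp) (by simp [hφ])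

theorem exists_comp_eq_of_llp {j : ℤ} (φ : X.X j ⟶ ModuleCat.of k k) :
    ∃ φ' : Y.X j ⟶ ModuleCat.of k k, f.f j ≫ φ' = φ := by
  obtain ⟨ψ, hψ, hdψ⟩ :=
    exists_comp_eq_of_d_comp_eq_zero_of_llp hf (X.d (j + 1) j ≫ φ) (by simp)
  exact (exists_lift_of_llp_diskToSphere rfl (hf _) φ ψ hdψ hψ).imp fun _ => And.left

theorem f_injective_of_llp (n : ℤ) : Function.Injective (f.f n) := by
  refine (injective_iff_map_eq_zero _).2 fun x hx =>
    ModuleCat.mem_of_forall_dual ⊥ fun φ _ => ?_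
  obtain ⟨φ', rfl⟩ := exists_comp_eq_of_llp hf φ
  simp [hx]

theorem mem_range_d_of_llp (n : ℤ) (x : X.X n)
    (hx : f.f n x ∈ LinearMap.range (Y.d (n + 1) n).hom) :
    x ∈ LinearMap.range (X.d (n + 1) n).hom := by
  refine ModuleCat.mem_of_forall_dual _ fun φ hφ => ?_
  obtain ⟨ψ, rfl, hdψ⟩ := exists_comp_eq_of_d_comp_eq_zero_of_llp hf φ
    (ModuleCat.hom_ext (LinearMap.ext fun a => hφ _ ⟨a, rfl⟩))
  obtain ⟨b, hb⟩ := hx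
  simpa [← hb] using congr($hdψ b)

theorem mem_map_ker_sup_range_d_of_llp (n : ℤ) (y : Y.X n) (hy : Y.d n (n - 1) y = 0) :
    y ∈ (LinearMap.ker (X.d n (n - 1)).hom).map (f.f n).hom ⊔
      LinearMap.range (Y.d (n + 1) n).hom := by
  refine ModuleCat.mem_of_forall_dual _ fun ψ hψ => ?_
  obtain ⟨Φ, hΦ⟩ := LinearMap.exists_comp_eq_of_ker_le (X.d n (n - 1)).hom (f.f n ≫ ψ).hom
    fun x hx => hψ _ (Submodule.mem_sup_left ⟨x, hx, rfl⟩)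
  obtain ⟨φ', -, rfl⟩ := exists_lift_of_llp_diskToSphere (by omega) (hf n)
    (ModuleCat.ofHom Φ) ψ (ModuleCat.hom_ext (LinearMap.ext fun b =>
      hψ _ (Submodule.mem_sup_right ⟨b, rfl⟩))) (ModuleCat.hom_ext hΦ.symm)
  simp [hy]

end Field

/-- A chain map over a field with the left lifting property with respect to all maps
`D^n ⟶ S^n` (`n ∈ ℤ`) is a monomorphism and a quasi-isomorphism. -/
theorem mono_and_quasiIso_of_llp_disk_to_sphere (k : Type) [Field k]
    {X Y : ChainComplex (ModuleCat k) ℤ} (f : X ⟶ Y)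
    (h : ∀ n : ℤ, HasLiftingProperty f (diskToSphere (ModuleCat.of k k) n)) :
    Mono f ∧ QuasiIso f := by
  refine ⟨mono_of_mono_f _ fun n => (ModuleCat.mono_iff_injective _).2 (f_injective_of_llp h n),
    ⟨fun n => ?_⟩⟩
  rw [quasiIsoAt_iff_isIso_homologyMap]
  have := mono_homologyMap_of_forall_mem_range f (ChainComplex.prev ℤ n)
    (ChainComplex.next ℤ n) fun x _ => mem_range_d_of_llp h n x
  have := epi_homologyMap_of_forall_mem_sup f (ChainComplex.prev ℤ n) (ChainComplex.next ℤ n)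
    (mem_map_ker_sup_range_d_of_llp h n)
  exact isIso_of_mono_of_epi _
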